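/- arXiv:2602.05776 — 2 statements merged into one kernel-verified Lean document; each statement's English description precedes it below -/
import Mathlib

section
/- (Telescoping / simulation lemma) Let M_1 = (S, A, P_1, r, γ) and M_2 = (S, A, P_2, r, γ) be two finite MDPs sharing state space, action space, reward, and discount but differing in transition dynamics. Then for any policy π, J_{M_1}(π) - J_{M_2}(π) = (γ/(1-γ)) · E_{(s,a) ∼ ρ^π_{M_1}}[ E_{s' ∼ P_1(·|s,a)}[V^π_{M_2}(s')] - E_{s' ∼ P_2(·|s,a)}[V^π_{M_2}(s')] ], where ρ^π_{M_1}(s,a) = (1-γ)Σ_{t≥0} γ^t P^π_{M_1,t}(s)π(a|s) is the normalized discounted state-action occupancy in M_1. -/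
/-!
Let `D(s) = ∑ₜ γᵗ Pr[sₜ = s]` be the discounted occupancy of `π` in an MDP with kernel `P`. Shifting
the time index gives the flow equation `D = init + γ · D P^π`, while `V = V^π_{M₂}` satisfies the
Bellman equation `V = r^π + γ P₂^π V`. Pairing the first with `V` and the second with `D` yields
`J_P = ⟨D, r^π⟩ = ⟨init, V⟩ + γ ⟨D π, P V - P₂ V⟩`. For `P = P₂` the correction vanishes, so
`J_{M₂} = ⟨init, V⟩`; for `P = P₁` the correction is the claimed one, since `ρ = (1 - γ) D π`.
-/

open Finset

/-- State distribution at time `t` induced by policy `pol` in the MDP with kernel `P`,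
starting from initial distribution `init`. -/
noncomputable def visit {S A : Type*} [Fintype S] [Fintype A]
    (P : S → A → S → ℝ) (pol : S → A → ℝ) (init : S → ℝ) : ℕ → S → ℝ
  | 0 => init
  | (t + 1) => fun s' => ∑ s, ∑ a, visit P pol init t s * pol s a * P s a s'

/-- Discounted return of policy `pol` from initial distribution `init`. -/
noncomputable def ret {S A : Type*} [Fintype S] [Fintype A]
    (P : S → A → S → ℝ) (pol : S → A → ℝ) (init : S → ℝ) (r : S → A → ℝ) (γ : ℝ) : ℝ :=
  ∑' t : ℕ, γ ^ t * ∑ s, visit P pol init t s * ∑ a, pol s a * r s a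

section

variable {S A : Type*} [Fintype S] [Fintype A]
  {P : S → A → S → ℝ} {pol : S → A → ℝ} {init : S → ℝ}

lemma visit_nonneg (hP : ∀ s a s', 0 ≤ P s a s') (hpol : ∀ s a, 0 ≤ pol s a)
    (hinit : ∀ s, 0 ≤ init s) : ∀ t s, 0 ≤ visit P pol init t s
  | 0, s => hinit s
  | t + 1, _ => sum_nonneg fun s _ => sum_nonneg fun a _ =>
      mul_nonneg (mul_nonneg (visit_nonneg hP hpol hinit t s) (hpol s a)) (hP s a _)

lemma sum_visit (hP : ∀ s a, ∑ s', P s a s' = 1) (hpol : ∀ s, ∑ a, pol s a = 1) (t : ℕ) :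
    ∑ s, visit P pol init t s = ∑ s, init s := by
  induction t with
  | zero => rfl
  | succ t ih =>
    calc ∑ s', visit P pol init (t + 1) s'
        = ∑ s, ∑ a, visit P pol init t s * pol s a * ∑ s', P s a s' := by
          simp only [visit, mul_sum]
          rw [sum_comm]
          exact sum_congr rfl fun s _ => sum_comm
      _ = ∑ s, visit P pol init t s := by simp only [hP, mul_one, ← mul_sum, hpol]
      _ = ∑ s, init s := ih

lemma summable_pow_mul_visit (hP_nonneg : ∀ s a s', 0 ≤ P s a s')
    (hP_sum : ∀ s a, ∑ s', P s a s' = 1) (hpol_nonneg : ∀ s a, 0 ≤ pol s a)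
    (hpol_sum : ∀ s, ∑ a, pol s a = 1) (hinit : ∀ s, 0 ≤ init s) {γ : ℝ} (hγ : |γ| < 1)
    (s : S) : Summable fun t => γ ^ t * visit P pol init t s := by
  have hvisit := visit_nonneg hP_nonneg hpol_nonneg hinit
  refine ((summable_geometric_of_lt_one (abs_nonneg γ) hγ).mul_right (∑ s, init s)).of_norm_bounded
    fun t => ?_
  rw [Real.norm_eq_abs, abs_mul, abs_pow, abs_of_nonneg (hvisit t s)]
  gcongr
  calc visit P pol init t s ≤ ∑ s, visit P pol init t s :=
        single_le_sum (fun s _ => hvisit t s) (mem_univ s)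
    _ = ∑ s, init s := sum_visit hP_sum hpol_sum t

noncomputable def occupancy (P : S → A → S → ℝ) (pol : S → A → ℝ) (init : S → ℝ) (γ : ℝ)
    (s : S) : ℝ :=
  ∑' t : ℕ, γ ^ t * visit P pol init t s

variable {γ : ℝ}

lemma ret_eq_sum_occupancy_mul (hsum : ∀ s, Summable fun t => γ ^ t * visit P pol init t s)
    (r : S → A → ℝ) :
    ret P pol init r γ = ∑ s, occupancy P pol init γ s * ∑ a, pol s a * r s a := by
  have hterm : ∀ t, γ ^ t * ∑ s, visit P pol init t s * ∑ a, pol s a * r s a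
      = ∑ s, γ ^ t * visit P pol init t s * ∑ a, pol s a * r s a := fun t => by
    simp only [mul_sum, mul_assoc]
  rw [ret, tsum_congr hterm, Summable.tsum_finsetSum fun s _ => (hsum s).mul_right _]
  exact sum_congr rfl fun s _ => tsum_mul_right

lemma occupancy_eq_add (hsum : ∀ s, Summable fun t => γ ^ t * visit P pol init t s) (s' : S) :
    occupancy P pol init γ s'
      = init s' + γ * ∑ s, ∑ a, occupancy P pol init γ s * pol s a * P s a s' := by
  have hterm : ∀ s a, Summable fun t => γ ^ t * visit P pol init t s * (pol s a * P s a s') :=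
    fun s a => (hsum s).mul_right _
  have hshift : ∀ t, γ ^ (t + 1) * visit P pol init (t + 1) s'
      = γ * ∑ s, ∑ a, γ ^ t * visit P pol init t s * (pol s a * P s a s') := fun t => by
    simp only [visit, mul_sum, pow_succ]
    exact sum_congr rfl fun s _ => sum_congr rfl fun a _ => by ring
  rw [occupancy, (hsum s').tsum_eq_zero_add, tsum_congr hshift, tsum_mul_left,
    Summable.tsum_finsetSum fun s _ => summable_sum fun a _ => hterm s a]
  simp only [pow_zero, one_mul, visit, occupancy]
  congr 2
  refine sum_congr rfl fun s _ => ?_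
  rw [Summable.tsum_finsetSum fun a _ => hterm s a]
  exact sum_congr rfl fun a _ => by rw [tsum_mul_right, mul_assoc]

lemma ret_eq_sum_init_mul_add_of_bellman
    (hsum : ∀ s, Summable fun t => γ ^ t * visit P pol init t s)
    {r : S → A → ℝ} {Q : S → A → S → ℝ} {V : S → ℝ}
    (hV : ∀ s, V s = ∑ a, pol s a * (r s a + γ * ∑ s', Q s a s' * V s')) :
    ret P pol init r γ = ∑ s, init s * V s + γ * ∑ s, ∑ a, occupancy P pol init γ s * pol s a *
      ((∑ s', P s a s' * V s') - ∑ s', Q s a s' * V s') := by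
  have hflow : ∑ s', occupancy P pol init γ s' * V s' = ∑ s, init s * V s
      + γ * ∑ s, ∑ a, occupancy P pol init γ s * pol s a * ∑ s', P s a s' * V s' := by
    calc ∑ s', occupancy P pol init γ s' * V s'
        = ∑ s', (init s' + γ * ∑ s, ∑ a, occupancy P pol init γ s * pol s a * P s a s') * V s' :=
          sum_congr rfl fun s' _ => by rw [occupancy_eq_add hsum s']
      _ = _ := by
          simp only [add_mul, sum_add_distrib, sum_mul, mul_sum]
          congr 1
          rw [sum_comm]
          refine sum_congr rfl fun s _ => ?_
          rw [sum_comm]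
          exact sum_congr rfl fun a _ => sum_congr rfl fun s' _ => by ring
  have hbellman : ∑ s, occupancy P pol init γ s * V s
      = ∑ s, occupancy P pol init γ s * ∑ a, pol s a * r s a
        + γ * ∑ s, ∑ a, occupancy P pol init γ s * pol s a * ∑ s', Q s a s' * V s' := by
    calc ∑ s, occupancy P pol init γ s * V s
        = ∑ s, occupancy P pol init γ s * ∑ a, pol s a * (r s a + γ * ∑ s', Q s a s' * V s') :=
          sum_congr rfl fun s _ => by rw [← hV s]
      _ = _ := by
          simp only [mul_add, sum_add_distrib, mul_sum]
          congr 1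
          exact sum_congr rfl fun s _ => sum_congr rfl fun a _ => sum_congr rfl fun s' _ => by ring
  rw [ret_eq_sum_occupancy_mul hsum]
  simp only [mul_sub, sum_sub_distrib]
  linear_combination hflow - hbellman

end

theorem telescoping_lemma_general
    {S A : Type*} [Fintype S] [Fintype A]
    (P1 P2 : S → A → S → ℝ) (pol : S → A → ℝ) (init : S → ℝ) (r : S → A → ℝ)
    (γ : ℝ) (hγ0 : 0 ≤ γ) (hγ1 : γ < 1)
    (hP1_nonneg : ∀ s a s', 0 ≤ P1 s a s') (hP1_sum : ∀ s a, ∑ s', P1 s a s' = 1)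
    (hP2_nonneg : ∀ s a s', 0 ≤ P2 s a s') (hP2_sum : ∀ s a, ∑ s', P2 s a s' = 1)
    (hpol_nonneg : ∀ s a, 0 ≤ pol s a) (hpol_sum : ∀ s, ∑ a, pol s a = 1)
    (hinit_nonneg : ∀ s, 0 ≤ init s)
    (V : S → ℝ)
    (hV : ∀ s, V s = ∑ a, pol s a * (r s a + γ * ∑ s', P2 s a s' * V s'))
    (ρ : S → A → ℝ)
    (hρ : ∀ s a, ρ s a = (1 - γ) * ∑' t : ℕ, γ ^ t * visit P1 pol init t s * pol s a) :
    ret P1 pol init r γ - ret P2 pol init r γ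
      = γ / (1 - γ) *
        ∑ s, ∑ a, ρ s a * ((∑ s', P1 s a s' * V s') - ∑ s', P2 s a s' * V s') := by
  have hγ : |γ| < 1 := abs_lt.2 ⟨by linarith, hγ1⟩
  have hsum1 := summable_pow_mul_visit hP1_nonneg hP1_sum hpol_nonneg hpol_sum hinit_nonneg hγ
  have hsum2 := summable_pow_mul_visit hP2_nonneg hP2_sum hpol_nonneg hpol_sum hinit_nonneg hγ
  have hρ_occ : ∀ s a, ρ s a = (1 - γ) * (occupancy P1 pol init γ s * pol s a) := fun s a => by
    rw [hρ, occupancy, ← tsum_mul_right]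
  rw [ret_eq_sum_init_mul_add_of_bellman hsum1 hV, ret_eq_sum_init_mul_add_of_bellman hsum2 hV]
  simp only [sub_self, mul_zero, sum_const_zero, add_zero, add_sub_cancel_left, hρ_occ, mul_assoc,
    ← mul_sum]
  field_simp [sub_ne_zero.2 hγ1.ne']

/-- the telescoping (simulation) lemma. -/
theorem telescoping_lemma
    {S A : Type*} [Fintype S] [Fintype A] [Nonempty S] [Nonempty A]
    (P1 P2 : S → A → S → ℝ) (pol : S → A → ℝ) (init : S → ℝ) (r : S → A → ℝ)
    (γ : ℝ) (hγ0 : 0 ≤ γ) (hγ1 : γ < 1)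
    (hP1_nonneg : ∀ s a s', 0 ≤ P1 s a s') (hP1_sum : ∀ s a, ∑ s', P1 s a s' = 1)
    (hP2_nonneg : ∀ s a s', 0 ≤ P2 s a s') (hP2_sum : ∀ s a, ∑ s', P2 s a s' = 1)
    (hpol_nonneg : ∀ s a, 0 ≤ pol s a) (hpol_sum : ∀ s, ∑ a, pol s a = 1)
    (hinit_nonneg : ∀ s, 0 ≤ init s) (hinit_sum : ∑ s, init s = 1)
    (rmax : ℝ) (hr : ∀ s a, |r s a| ≤ rmax)
    (V : S → ℝ)
    (hV : ∀ s, V s = ∑ a, pol s a * (r s a + γ * ∑ s', P2 s a s' * V s'))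
    (ρ : S → A → ℝ)
    (hρ : ∀ s a, ρ s a = (1 - γ) * ∑' t : ℕ, γ ^ t * visit P1 pol init t s * pol s a) :
    ret P1 pol init r γ - ret P2 pol init r γ
      = γ / (1 - γ) *
        ∑ s, ∑ a, ρ s a * ((∑ s', P1 s a s' * V s') - ∑ s', P2 s a s' * V s') :=
  telescoping_lemma_general P1 P2 pol init r γ hγ0 hγ1 hP1_nonneg hP1_sum hP2_nonneg hP2_sum
    hpol_nonneg hpol_sum hinit_nonneg V hV ρ hρ
end

section
/- Let M_1 and M_2 be finite MDPs sharing (S, A, r, γ) with |r| ≤ r_max, and suppose their policy-induced dynamics under π differ in ℓ1 norm by at most δ at every state. Then the value functions satisfy ||V^π_{M_1} - V^π_{M_2}||_∞ ≤ γ r_max δ / (1-γ)². -/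
open Finset

/-- value-function gap under a bound on the policy-induced dynamics gap. -/
theorem value_gap_induced_dynamics
    {S A : Type*} [Fintype S] [Fintype A] [Nonempty S] [Nonempty A]
    (P1 P2 : S → A → S → ℝ) (pol : S → A → ℝ) (r : S → A → ℝ)
    (γ δ rmax : ℝ) (hγ0 : 0 ≤ γ) (hγ1 : γ < 1) (hδ : 0 ≤ δ) (hrmax : 0 ≤ rmax)
    (hP1_nonneg : ∀ s a s', 0 ≤ P1 s a s') (hP1_sum : ∀ s a, ∑ s', P1 s a s' = 1)
    (hP2_nonneg : ∀ s a s', 0 ≤ P2 s a s') (hP2_sum : ∀ s a, ∑ s', P2 s a s' = 1)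
    (hpol_nonneg : ∀ s a, 0 ≤ pol s a) (hpol_sum : ∀ s, ∑ a, pol s a = 1)
    (hr : ∀ s a, |r s a| ≤ rmax)
    (hker : ∀ s, ∑ s', |(∑ a, P1 s a s' * pol s a) - ∑ a, P2 s a s' * pol s a| ≤ δ)
    (V1 V2 : S → ℝ)
    (hV1 : ∀ s, V1 s = ∑ a, pol s a * (r s a + γ * ∑ s', P1 s a s' * V1 s'))
    (hV2 : ∀ s, V2 s = ∑ a, pol s a * (r s a + γ * ∑ s', P2 s a s' * V2 s'))
    (hb1 : ∀ s, |V1 s| ≤ rmax / (1 - γ))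
    (hb2 : ∀ s, |V2 s| ≤ rmax / (1 - γ)) :
    ∀ s, |V1 s - V2 s| ≤ γ * rmax * δ / (1 - γ) ^ 2 := by
  have h1γ : 0 < 1 - γ := by linarith
  set K1 : S → S → ℝ := fun s s' => ∑ a, P1 s a s' * pol s a with hK1
  set K2 : S → S → ℝ := fun s s' => ∑ a, P2 s a s' * pol s a with hK2
  have e1 : ∀ (V : S → ℝ) s, ∑ s', K1 s s' * V s'
      = ∑ a, pol s a * ∑ s', P1 s a s' * V s' := by
    intro V s
    simp only [hK1, Finset.sum_mul, Finset.mul_sum]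
    rw [Finset.sum_comm]
    exact Finset.sum_congr rfl fun a _ => Finset.sum_congr rfl fun s' _ => by ring
  have e2 : ∀ (V : S → ℝ) s, ∑ s', K2 s s' * V s'
      = ∑ a, pol s a * ∑ s', P2 s a s' * V s' := by
    intro V s
    simp only [hK2, Finset.sum_mul, Finset.mul_sum]
    rw [Finset.sum_comm]
    exact Finset.sum_congr rfl fun a _ => Finset.sum_congr rfl fun s' _ => by ring
  have key : ∀ s, V1 s - V2 s
      = γ * ((∑ s', K1 s s' * (V1 s' - V2 s')) + ∑ s', (K1 s s' - K2 s s') * V2 s') := by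
    intro s
    have l1 : V1 s = (∑ a, pol s a * r s a) + γ * ∑ s', K1 s s' * V1 s' := by
      rw [hV1 s, e1 V1 s, Finset.mul_sum, ← Finset.sum_add_distrib]
      exact Finset.sum_congr rfl fun a _ => by ring
    have l2 : V2 s = (∑ a, pol s a * r s a) + γ * ∑ s', K2 s s' * V2 s' := by
      rw [hV2 s, e2 V2 s, Finset.mul_sum, ← Finset.sum_add_distrib]
      exact Finset.sum_congr rfl fun a _ => by ring
    rw [l1, l2]
    have : (∑ s', K1 s s' * (V1 s' - V2 s')) + ∑ s', (K1 s s' - K2 s s') * V2 s'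
        = (∑ s', K1 s s' * V1 s') - ∑ s', K2 s s' * V2 s' := by
      rw [← Finset.sum_add_distrib, ← Finset.sum_sub_distrib]
      exact Finset.sum_congr rfl fun s' _ => by ring
    rw [this]; ring
  have hK1nn : ∀ s s', 0 ≤ K1 s s' := fun s s' =>
    Finset.sum_nonneg fun a _ => mul_nonneg (hP1_nonneg s a s') (hpol_nonneg s a)
  have hK1sum : ∀ s, ∑ s', K1 s s' = 1 := by
    intro s
    rw [Finset.sum_comm]
    calc ∑ a, ∑ s', P1 s a s' * pol s a
        = ∑ a, pol s a := by
          refine Finset.sum_congr rfl fun a _ => ?_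
          rw [← Finset.sum_mul, hP1_sum s a, one_mul]
      _ = 1 := hpol_sum s
  obtain ⟨s0, -, hs0⟩ := Finset.exists_max_image Finset.univ
    (fun s => |V1 s - V2 s|) ⟨Classical.arbitrary S, Finset.mem_univ _⟩
  set D := |V1 s0 - V2 s0| with hD
  have hDnn : 0 ≤ D := abs_nonneg _
  have hmax : ∀ s, |V1 s - V2 s| ≤ D := fun s => hs0 s (Finset.mem_univ s)
  -- bound the two terms at s0
  have t1 : |∑ s', K1 s0 s' * (V1 s' - V2 s')| ≤ D := by
    calc |∑ s', K1 s0 s' * (V1 s' - V2 s')|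
        ≤ ∑ s', |K1 s0 s' * (V1 s' - V2 s')| := Finset.abs_sum_le_sum_abs _ _
      _ ≤ ∑ s', K1 s0 s' * D := by
          refine Finset.sum_le_sum fun s' _ => ?_
          rw [abs_mul, abs_of_nonneg (hK1nn s0 s')]
          exact mul_le_mul_of_nonneg_left (hmax s') (hK1nn s0 s')
      _ = D := by rw [← Finset.sum_mul, hK1sum s0, one_mul]
  have t2 : |∑ s', (K1 s0 s' - K2 s0 s') * V2 s'| ≤ δ * (rmax / (1 - γ)) := by
    calc |∑ s', (K1 s0 s' - K2 s0 s') * V2 s'|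
        ≤ ∑ s', |(K1 s0 s' - K2 s0 s') * V2 s'| := Finset.abs_sum_le_sum_abs _ _
      _ ≤ ∑ s', |K1 s0 s' - K2 s0 s'| * (rmax / (1 - γ)) := by
          refine Finset.sum_le_sum fun s' _ => ?_
          rw [abs_mul]
          exact mul_le_mul_of_nonneg_left (hb2 s') (abs_nonneg _)
      _ = (∑ s', |K1 s0 s' - K2 s0 s'|) * (rmax / (1 - γ)) := by rw [Finset.sum_mul]
      _ ≤ δ * (rmax / (1 - γ)) :=
          mul_le_mul_of_nonneg_right (hker s0) (div_nonneg hrmax h1γ.le)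
  have hbound : D ≤ γ * D + γ * (δ * (rmax / (1 - γ))) := by
    have := key s0
    calc D = |γ * ((∑ s', K1 s0 s' * (V1 s' - V2 s')) + ∑ s', (K1 s0 s' - K2 s0 s') * V2 s')| := by
          rw [hD, this]
      _ = γ * |(∑ s', K1 s0 s' * (V1 s' - V2 s')) + ∑ s', (K1 s0 s' - K2 s0 s') * V2 s'| := by
          rw [abs_mul, abs_of_nonneg hγ0]
      _ ≤ γ * (|∑ s', K1 s0 s' * (V1 s' - V2 s')| + |∑ s', (K1 s0 s' - K2 s0 s') * V2 s'|) :=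
          mul_le_mul_of_nonneg_left (abs_add_le _ _) hγ0
      _ ≤ γ * (D + δ * (rmax / (1 - γ))) :=
          mul_le_mul_of_nonneg_left (add_le_add t1 t2) hγ0
      _ = γ * D + γ * (δ * (rmax / (1 - γ))) := by ring
  have hDle : D ≤ γ * rmax * δ / (1 - γ) ^ 2 := by
    have h1 : (1 - γ) * D ≤ γ * (δ * (rmax / (1 - γ))) := by linarith
    have h3 : (1 - γ) * (γ * (δ * (rmax / (1 - γ)))) = γ * δ * rmax := by
      field_simp
    have h4 := mul_le_mul_of_nonneg_left h1 h1γ.le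
    rw [h3] at h4
    rw [le_div_iff₀ (pow_pos h1γ 2)]
    nlinarith [h4]
  intro s
  exact le_trans (hmax s) hDle
end
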